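/- arXiv:0910.2830 — 4 statements merged into one kernel-verified Lean document; each statement's English description precedes it below -/
import Mathlib

section
/- Let M be a skew-symmetric 6×6 matrix over GF(3), written in nine 2×2 blocks M_{ij} (1 ≤ i,j ≤ 3). Then every two not necessarily distinct elements of F4 are opposite with respect to M (i.e., F4 is a partial perp-system for M) if and only if: the diagonal blocks M₁₁, M₂₂, M₃₃ each equal X or −X; the blocks M₁₂, M₁₃, M₂₃ are invertible; the three block-row sums M₁₁+M₁₂+M₁₃, M₂₁+M₂₂+M₂₃, M₃₁+M₃₂+M₃₃ are invertible; and the sum of all nine blocks of M is nonzero. -/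
open Matrix

abbrev F3 := ZMod 3
abbrev V6 := Fin 6 → F3

/-- The line (2-dim subspace) represented by a 2×6 matrix: the span of its rows. -/
def lineOf (A : Matrix (Fin 2) (Fin 6) F3) : Submodule F3 V6 :=
  Submodule.span F3 (Set.range A)

/-- The perp of a subspace `W` with respect to a 6×6 Gram matrix `M`:
`{x | xᵀ M w = 0 for all w ∈ W}`. -/
def perp (M : Matrix (Fin 6) (Fin 6) F3) (W : Submodule F3 V6) : Submodule F3 V6 where
  carrier := {x | ∀ w ∈ W, x ⬝ᵥ M.mulVec w = 0}
  add_mem' := by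
    intro a b ha hb w hw
    simp only [Set.mem_setOf_eq] at *
    rw [add_dotProduct, ha w hw, hb w hw, add_zero]
  zero_mem' := by
    intro w hw
    exact zero_dotProduct _
  smul_mem' := by
    intro c x hx w hw
    simp only [Set.mem_setOf_eq] at *
    rw [smul_dotProduct, hx w hw, smul_zero]

/-- A 2×6 matrix built from three 2×2 blocks. -/
def blk3 (A B C : Matrix (Fin 2) (Fin 2) F3) : Matrix (Fin 2) (Fin 6) F3 :=
  Matrix.of fun i j => ![A, B, C] ⟨(j : ℕ) / 2, by omega⟩ i ⟨(j : ℕ) % 2, by omega⟩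

/-- A 6×6 matrix built from nine 2×2 blocks. -/
def blk33 (M : Matrix (Fin 3) (Fin 3) (Matrix (Fin 2) (Fin 2) F3)) :
    Matrix (Fin 6) (Fin 6) F3 :=
  Matrix.of fun i j =>
    M ⟨(i : ℕ) / 2, by omega⟩ ⟨(j : ℕ) / 2, by omega⟩ ⟨(i : ℕ) % 2, by omega⟩ ⟨(j : ℕ) % 2, by omega⟩

/-- The 2×2 block of a 6×6 matrix in block-position `(i, j)`. -/
def blkAt (M : Matrix (Fin 6) (Fin 6) F3) (i j : Fin 3) : Matrix (Fin 2) (Fin 2) F3 :=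
  Matrix.of fun a b => M ⟨2 * (i : ℕ) + (a : ℕ), by omega⟩ ⟨2 * (j : ℕ) + (b : ℕ), by omega⟩

/-- Two (not necessarily distinct) lines are opposite w.r.t. `M` if `ℓ ∩ m^⊥ = 0`. -/
def Opp (M : Matrix (Fin 6) (Fin 6) F3) (ℓ m : Submodule F3 V6) : Prop :=
  ℓ ⊓ perp M m = ⊥

def X2 : Matrix (Fin 2) (Fin 2) F3 := !![0, 1; 2, 0]

/-- The set `F4` of four lines of `PG(5,3)`, i.e. the lines represented by
`(I O O)`, `(O I O)`, `(O O I)` and `(I I I)`. -/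
def F4 : Set (Submodule F3 V6) :=
  {lineOf (blk3 1 0 0), lineOf (blk3 0 1 0), lineOf (blk3 0 0 1), lineOf (blk3 1 1 1)}


/-! A line represented by a rank-2 matrix `A` is opposite to the line represented by `B` exactly
when the 2×2 Gram matrix `A M Bᵀ` is invertible. For the four representatives of `F4` these Gram
matrices are the single blocks `M_ij`, the block-row sums, the block-column sums and the sum of
all nine blocks. Skew-symmetry of `M` makes the Gram matrix of `(m, ℓ)` the negative transpose of
that of `(ℓ, m)`, so only unordered pairs matter, and makes the four diagonal Gram matrices
skew-symmetric; a skew-symmetric 2×2 matrix over `GF(3)` is `0` or `±X`, and it is invertible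
iff it is nonzero. -/

section Skew

variable {m n R : Type*} [Fintype n] [CommRing R] {M : Matrix n n R}

theorem Matrix.transpose_mul_mul_transpose_of_transpose_eq_neg (hM : Mᵀ = -M)
    (A B : Matrix m n R) : (A * M * Bᵀ)ᵀ = -(B * M * Aᵀ) := by
  rw [transpose_mul, transpose_mul, transpose_transpose, hM, Matrix.neg_mul, Matrix.mul_neg,
    Matrix.mul_assoc]

theorem Matrix.isUnit_mul_mul_transpose_comm [Fintype m] [DecidableEq m] (hM : Mᵀ = -M)
    (A B : Matrix m n R) : IsUnit (A * M * Bᵀ) ↔ IsUnit (B * M * Aᵀ) := by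
  rw [← isUnit_transpose, transpose_mul_mul_transpose_of_transpose_eq_neg hM, IsUnit.neg_iff]

end Skew

theorem Matrix.isUnit_iff_ne_zero_of_transpose_eq_neg {K : Type*} [Field K] (h2 : (2 : K) ≠ 0)
    {D : Matrix (Fin 2) (Fin 2) K} (hD : Dᵀ = -D) : IsUnit D ↔ D ≠ 0 := by
  have hD' : ∀ i j, D j i = -D i j := fun i j => congrFun (congrFun hD i) j
  have hdiag : ∀ i, D i i = 0 := fun i =>
    (mul_eq_zero.1 (by linear_combination hD' i i : (2 : K) * D i i = 0)).resolve_left h2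
  have hD_eq : D = !![0, D 0 1; -D 0 1, 0] := by
    ext i j; fin_cases i <;> fin_cases j <;> simp [hdiag, hD' 0 1]
  rw [isUnit_iff_isUnit_det, isUnit_iff_ne_zero, hD_eq, det_fin_two_of]
  simp [← Matrix.ext_iff, Fin.forall_fin_two]

lemma isUnit_iff_eq_X2_or_neg_of_transpose_eq_neg {D : Matrix (Fin 2) (Fin 2) F3}
    (hD : Dᵀ = -D) : IsUnit D ↔ D = X2 ∨ D = -X2 := by
  rw [isUnit_iff_ne_zero_of_transpose_eq_neg (by decide) hD]
  revert D
  decide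

lemma mem_lineOf {A : Matrix (Fin 2) (Fin 6) F3} {x : V6} :
    x ∈ lineOf A ↔ ∃ c : Fin 2 → F3, c ᵥ* A = x := by
  change x ∈ Submodule.span F3 (Set.range A.row) ↔ _
  rw [← range_vecMulLinear, LinearMap.mem_range]
  rfl

lemma mem_perp_lineOf {M : Matrix (Fin 6) (Fin 6) F3} {B : Matrix (Fin 2) (Fin 6) F3} {x : V6} :
    x ∈ perp M (lineOf B) ↔ x ᵥ* (M * Bᵀ) = 0 := by
  change (∀ w ∈ lineOf B, x ⬝ᵥ M *ᵥ w = 0) ↔ _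
  simp only [mem_lineOf, forall_exists_index, forall_apply_eq_imp_iff, ← vecMul_transpose,
    vecMul_vecMul, dotProduct_comm x, ← dotProduct_mulVec, transpose_transpose]
  simp_rw [dotProduct_comm _ (x ᵥ* _)]
  exact dotProduct_eq_zero_iff

lemma opp_lineOf_iff_isUnit {M : Matrix (Fin 6) (Fin 6) F3} {A B : Matrix (Fin 2) (Fin 6) F3}
    (hA : Function.Injective A.vecMul) :
    Opp M (lineOf A) (lineOf B) ↔ IsUnit (A * M * Bᵀ) := by
  rw [← vecMul_injective_iff_isUnit, ← coe_vecMulLinear, injective_iff_map_eq_zero, Opp,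
    Submodule.eq_bot_iff]
  simp only [Submodule.mem_inf, and_imp, mem_lineOf, mem_perp_lineOf, forall_exists_index,
    forall_apply_eq_imp_iff, vecMul_vecMul, Matrix.mul_assoc, vecMulLinear_apply,
    hA.eq_iff' (zero_vecMul A)]

lemma sum_fin_six_eq_sum_blocks {α : Type*} [AddCommMonoid α] (f : Fin 6 → α) :
    ∑ l, f l = ∑ i : Fin 3, ∑ c : Fin 2, f ⟨2 * i + c, by omega⟩ := by
  simp only [Fin.sum_univ_six, Fin.sum_univ_three, Fin.sum_univ_two, add_assoc]
  rfl

lemma blk3_apply (P Q R : Matrix (Fin 2) (Fin 2) F3) (a : Fin 2) (i : Fin 3) (c : Fin 2) :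
    blk3 P Q R a ⟨2 * i + c, by omega⟩ = ![P, Q, R] i a c := by
  have hi : (⟨(2 * i + c) / 2, by omega⟩ : Fin 3) = i := Fin.ext (by dsimp only; omega)
  have hc : (⟨(2 * i + c) % 2, by omega⟩ : Fin 2) = c := Fin.ext (by dsimp only; omega)
  simp only [blk3, of_apply, hi, hc]

lemma vecMul_blk3_apply (P Q R : Matrix (Fin 2) (Fin 2) F3) (v : Fin 2 → F3) (i : Fin 3)
    (c : Fin 2) : (v ᵥ* blk3 P Q R) ⟨2 * i + c, by omega⟩ = (v ᵥ* ![P, Q, R] i) c := by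
  simp only [vecMul, dotProduct, blk3_apply]

lemma vecMul_blk3_injective {P Q R : Matrix (Fin 2) (Fin 2) F3} (i : Fin 3)
    (hi : IsUnit (![P, Q, R] i)) : Function.Injective (blk3 P Q R).vecMul := by
  intro v w hvw
  refine vecMul_injective_iff_isUnit.2 hi (funext fun c => ?_)
  simpa only [vecMul_blk3_apply] using congrFun hvw ⟨2 * i + c, by omega⟩

lemma blk3_mul_mul_blk3_transpose (M : Matrix (Fin 6) (Fin 6) F3)
    (P Q R P' Q' R' : Matrix (Fin 2) (Fin 2) F3) :
    blk3 P Q R * M * (blk3 P' Q' R')ᵀ =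
      ∑ i, ∑ j, ![P, Q, R] i * blkAt M i j * (![P', Q', R'] j)ᵀ := by
  ext a b
  simp only [mul_apply, sum_fin_six_eq_sum_blocks, transpose_apply, blk3_apply, Matrix.sum_apply,
    Finset.sum_mul, blkAt, of_apply]
  rw [Finset.sum_comm]
  conv_lhs => enter [2, j]; rw [Finset.sum_comm]
  rw [Finset.sum_comm]
  exact Finset.sum_congr rfl fun i _ => Finset.sum_comm

/-- For a skew-symmetric 6×6 matrix `M` over `GF(3)`, the set `F4` is a
partial perp-system with respect to `M` if and only if the diagonal blocks are `±X`, the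
strictly upper blocks are invertible, the three block-row sums are invertible, and the sum
of all nine blocks is nonzero. -/
theorem stmt0 (M : Matrix (Fin 6) (Fin 6) F3) (hskew : Mᵀ = -M) :
    (∀ ℓ ∈ F4, ∀ m ∈ F4, Opp M ℓ m) ↔
      ((blkAt M 0 0 = X2 ∨ blkAt M 0 0 = -X2) ∧
       (blkAt M 1 1 = X2 ∨ blkAt M 1 1 = -X2) ∧
       (blkAt M 2 2 = X2 ∨ blkAt M 2 2 = -X2) ∧
       IsUnit (blkAt M 0 1) ∧ IsUnit (blkAt M 0 2) ∧ IsUnit (blkAt M 1 2) ∧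
       IsUnit (blkAt M 0 0 + blkAt M 0 1 + blkAt M 0 2) ∧
       IsUnit (blkAt M 1 0 + blkAt M 1 1 + blkAt M 1 2) ∧
       IsUnit (blkAt M 2 0 + blkAt M 2 1 + blkAt M 2 2) ∧
       (blkAt M 0 0 + blkAt M 0 1 + blkAt M 0 2 +
        blkAt M 1 0 + blkAt M 1 1 + blkAt M 1 2 +
        blkAt M 2 0 + blkAt M 2 1 + blkAt M 2 2 ≠ 0)) := by
  set E₀ := blk3 1 0 0
  set E₁ := blk3 0 1 0
  set E₂ := blk3 0 0 1
  set E₃ := blk3 1 1 1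
  have hskewGram (A : Matrix (Fin 2) (Fin 6) F3) : (A * M * Aᵀ)ᵀ = -(A * M * Aᵀ) :=
    transpose_mul_mul_transpose_of_transpose_eq_neg hskew A A
  simp only [F4, Set.mem_insert_iff, Set.mem_singleton_iff, forall_eq_or_imp, forall_eq,
    opp_lineOf_iff_isUnit (vecMul_blk3_injective 0 isUnit_one : Function.Injective E₀.vecMul),
    opp_lineOf_iff_isUnit (vecMul_blk3_injective 1 isUnit_one : Function.Injective E₁.vecMul),
    opp_lineOf_iff_isUnit (vecMul_blk3_injective 2 isUnit_one : Function.Injective E₂.vecMul),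
    opp_lineOf_iff_isUnit (vecMul_blk3_injective 0 isUnit_one : Function.Injective E₃.vecMul)]
  rw [isUnit_mul_mul_transpose_comm hskew E₁ E₀, isUnit_mul_mul_transpose_comm hskew E₂ E₀,
    isUnit_mul_mul_transpose_comm hskew E₂ E₁, isUnit_mul_mul_transpose_comm hskew E₃ E₀,
    isUnit_mul_mul_transpose_comm hskew E₃ E₁, isUnit_mul_mul_transpose_comm hskew E₃ E₂,
    isUnit_iff_eq_X2_or_neg_of_transpose_eq_neg (hskewGram E₀),
    isUnit_iff_eq_X2_or_neg_of_transpose_eq_neg (hskewGram E₁),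
    isUnit_iff_eq_X2_or_neg_of_transpose_eq_neg (hskewGram E₂),
    isUnit_iff_ne_zero_of_transpose_eq_neg (by decide) (hskewGram E₃)]
  simp only [E₀, E₁, E₂, E₃, blk3_mul_mul_blk3_transpose, Fin.sum_univ_three, cons_val,
    one_mul, zero_mul, mul_one, mul_zero, transpose_one, transpose_zero, add_zero, zero_add,
    ← add_assoc]
  tauto
end

section
/- A matrix g ∈ GL(6,3) maps each of the four lines of F4 to itself (under the action sending a line W to {v·g : v ∈ W}, vectors viewed as row vectors) if and only if g is the block-diagonal matrix diag(E,E,E) for some E ∈ GL(2,3). -/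
open Matrix

/-- The block-diagonal matrix `diag(E, E, E)`. -/
def diag3 (E : Matrix (Fin 2) (Fin 2) F3) : Matrix (Fin 6) (Fin 6) F3 :=
  blk33 !![E, 0, 0; 0, E, 0; 0, 0, E]

/-!
The four lines of `F4` are the row spaces of `P₁ = (I O O)`, `P₂ = (O I O)`, `P₃ = (O O I)` and
`P₁ + P₂ + P₃ = (I I I)`. If `g` stabilises the row space of `Pₖ`, then `Pₖ g = Xₖ Pₖ` for some
`2 × 2` matrix `Xₖ`. For `k ≤ 3` this says that `g` is block diagonal with blocks `X₁, X₂, X₃`,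
and then `(I I I) g = (X₁ X₂ X₃)` lies in the row space of `(I I I)` only if `X₁ = X₂ = X₃`.
The block `E` is invertible because `P₁ g = E P₁` and `P₁` has a right inverse. Conversely
`diag(E, E, E)` sends `Pₖ` to `E Pₖ`, which has the same row space when `E` is invertible.
-/

section SpanRows

variable {R : Type*} [CommRing R] {l m n : Type*}

theorem Matrix.span_range_eq_range_vecMulLinear [Fintype m] (A : Matrix m n R) :
    Submodule.span R (Set.range A) = LinearMap.range A.vecMulLinear :=
  (range_vecMulLinear A).symm

theorem Matrix.map_vecMulLinear_span_range [Fintype n] (A : Matrix m n R) (g : Matrix n l R) :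
    (Submodule.span R (Set.range A)).map g.vecMulLinear =
      Submodule.span R (Set.range (A * g)) := by
  rw [Submodule.map_span]
  exact congrArg _ (Set.range_comp g.vecMulLinear A.row).symm

theorem Matrix.span_range_mul_le [Fintype m] (E : Matrix l m R) (A : Matrix m n R) :
    Submodule.span R (Set.range (E * A)) ≤ Submodule.span R (Set.range A) := by
  rw [Submodule.span_le, span_range_eq_range_vecMulLinear]
  rintro _ ⟨i, rfl⟩
  exact ⟨E i, rfl⟩

theorem Matrix.span_range_mul_of_isUnit [Fintype m] [DecidableEq m] {E : Matrix m m R}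
    (hE : IsUnit E) (A : Matrix m n R) :
    Submodule.span R (Set.range (E * A)) = Submodule.span R (Set.range A) := by
  refine (span_range_mul_le E A).antisymm ?_
  simpa [← Matrix.mul_assoc, Matrix.nonsing_inv_mul _ ((isUnit_iff_isUnit_det E).mp hE)]
    using span_range_mul_le E⁻¹ (E * A)

theorem Matrix.exists_eq_mul_of_span_range_le [Fintype m] {A : Matrix m n R}
    {B : Matrix l n R} (h : Submodule.span R (Set.range B) ≤ Submodule.span R (Set.range A)) :
    ∃ X : Matrix l m R, B = X * A := by
  rw [Submodule.span_le, span_range_eq_range_vecMulLinear] at h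
  choose X hX using fun i => h ⟨i, rfl⟩
  exact ⟨X, funext fun i => (hX i).symm⟩

theorem Matrix.isUnit_of_mul_eq_mul [Fintype m] [DecidableEq m] [Fintype n] [DecidableEq n]
    {A : Matrix m n R} {B : Matrix n m R} (hAB : A * B = 1) {E : Matrix m m R}
    {g : Matrix n n R} (hg : IsUnit g) (h : E * A = A * g) : IsUnit E := by
  refine IsUnit.of_mul_eq_one (A * g⁻¹ * B) ?_
  rw [← Matrix.mul_assoc, ← Matrix.mul_assoc, h, Matrix.mul_assoc A,
    Matrix.mul_nonsing_inv _ ((isUnit_iff_isUnit_det g).mp hg), Matrix.mul_one, hAB]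

end SpanRows

theorem blk3_eq (A B C : Matrix (Fin 2) (Fin 2) F3) :
    blk3 A B C = !![A 0 0, A 0 1, B 0 0, B 0 1, C 0 0, C 0 1;
                    A 1 0, A 1 1, B 1 0, B 1 1, C 1 0, C 1 1] := by
  ext i j
  fin_cases i <;> fin_cases j <;> rfl

theorem diag3_eq (E : Matrix (Fin 2) (Fin 2) F3) :
    diag3 E = !![E 0 0, E 0 1, 0, 0, 0, 0;
                 E 1 0, E 1 1, 0, 0, 0, 0;
                 0, 0, E 0 0, E 0 1, 0, 0;
                 0, 0, E 1 0, E 1 1, 0, 0;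
                 0, 0, 0, 0, E 0 0, E 0 1;
                 0, 0, 0, 0, E 1 0, E 1 1] := by
  ext i j
  fin_cases i <;> fin_cases j <;> rfl

theorem blk3_inj {A B C A' B' C' : Matrix (Fin 2) (Fin 2) F3} :
    blk3 A B C = blk3 A' B' C' ↔ A = A' ∧ B = B' ∧ C = C' := by
  refine ⟨fun h => ?_, fun ⟨rfl, rfl, rfl⟩ => rfl⟩
  simp only [blk3_eq, ← Matrix.ext_iff, Fin.forall_fin_succ] at h ⊢
  simp_all

theorem blk3_add (A B C A' B' C' : Matrix (Fin 2) (Fin 2) F3) :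
    blk3 A B C + blk3 A' B' C' = blk3 (A + A') (B + B') (C + C') := by
  ext i j
  fin_cases i <;> fin_cases j <;> simp [blk3_eq]

theorem mul_blk3 (E A B C : Matrix (Fin 2) (Fin 2) F3) :
    E * blk3 A B C = blk3 (E * A) (E * B) (E * C) := by
  ext i j
  fin_cases i <;> fin_cases j <;> simp [blk3_eq, Matrix.mul_apply]

theorem blk3_mul_diag3 (A B C E : Matrix (Fin 2) (Fin 2) F3) :
    blk3 A B C * diag3 E = blk3 (A * E) (B * E) (C * E) := by
  ext i j
  fin_cases i <;> fin_cases j <;> simp [blk3_eq, diag3_eq, Matrix.mul_apply, Fin.sum_univ_six]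

theorem blk3_one_zero_zero_mul_transpose : blk3 1 0 0 * (blk3 1 0 0)ᵀ = 1 := by
  ext i j
  fin_cases i <;> fin_cases j <;> simp [blk3_eq, Matrix.mul_apply, Fin.sum_univ_six]

theorem sum_transpose_mul_blk3_eq_one :
    (blk3 1 0 0)ᵀ * blk3 1 0 0 + (blk3 0 1 0)ᵀ * blk3 0 1 0 + (blk3 0 0 1)ᵀ * blk3 0 0 1 = 1 := by
  ext i j
  fin_cases i <;> fin_cases j <;> simp [blk3_eq, Matrix.mul_apply]

theorem ext_of_blk3_mul {g g' : Matrix (Fin 6) (Fin 6) F3}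
    (h₁ : blk3 1 0 0 * g = blk3 1 0 0 * g') (h₂ : blk3 0 1 0 * g = blk3 0 1 0 * g')
    (h₃ : blk3 0 0 1 * g = blk3 0 0 1 * g') : g = g' := by
  calc g = ((blk3 1 0 0)ᵀ * blk3 1 0 0 + (blk3 0 1 0)ᵀ * blk3 0 1 0
          + (blk3 0 0 1)ᵀ * blk3 0 0 1) * g := by
        rw [sum_transpose_mul_blk3_eq_one, Matrix.one_mul]
    _ = (blk3 1 0 0)ᵀ * (blk3 1 0 0 * g) + (blk3 0 1 0)ᵀ * (blk3 0 1 0 * g)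
          + (blk3 0 0 1)ᵀ * (blk3 0 0 1 * g) := by simp only [Matrix.add_mul, Matrix.mul_assoc]
    _ = g' := by
      rw [h₁, h₂, h₃]
      simp only [← Matrix.mul_assoc, ← Matrix.add_mul, sum_transpose_mul_blk3_eq_one,
        Matrix.one_mul]

theorem isUnit_of_isUnit_diag3 {E : Matrix (Fin 2) (Fin 2) F3} (h : IsUnit (diag3 E)) :
    IsUnit E :=
  Matrix.isUnit_of_mul_eq_mul blk3_one_zero_zero_mul_transpose h <| by
    rw [mul_blk3, blk3_mul_diag3]
    simp

theorem exists_mul_eq_mul_of_map_lineOf {A : Matrix (Fin 2) (Fin 6) F3}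
    {g : Matrix (Fin 6) (Fin 6) F3} (h : (lineOf A).map g.vecMulLinear = lineOf A) :
    ∃ X : Matrix (Fin 2) (Fin 2) F3, A * g = X * A := by
  rw [lineOf, Matrix.map_vecMulLinear_span_range] at h
  exact Matrix.exists_eq_mul_of_span_range_le h.le

theorem map_lineOf_blk3_diag3 {E : Matrix (Fin 2) (Fin 2) F3} (hE : IsUnit E)
    {A B C : Matrix (Fin 2) (Fin 2) F3} (hA : Commute A E) (hB : Commute B E)
    (hC : Commute C E) :
    (lineOf (blk3 A B C)).map (diag3 E).vecMulLinear = lineOf (blk3 A B C) := by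
  rw [lineOf, Matrix.map_vecMulLinear_span_range, blk3_mul_diag3, hA.eq, hB.eq, hC.eq,
    ← mul_blk3, Matrix.span_range_mul_of_isUnit hE]

theorem exists_eq_diag3_of_forall_map_eq {g : Matrix (Fin 6) (Fin 6) F3}
    (h : ∀ ℓ ∈ F4, ℓ.map g.vecMulLinear = ℓ) : ∃ E, g = diag3 E := by
  have stab (A : Matrix (Fin 2) (Fin 6) F3) (hA : lineOf A ∈ F4) :
      ∃ X : Matrix (Fin 2) (Fin 2) F3, A * g = X * A :=
    exists_mul_eq_mul_of_map_lineOf (h _ hA)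
  obtain ⟨X₁, h₁⟩ := stab (blk3 1 0 0) (by simp [F4])
  obtain ⟨X₂, h₂⟩ := stab (blk3 0 1 0) (by simp [F4])
  obtain ⟨X₃, h₃⟩ := stab (blk3 0 0 1) (by simp [F4])
  obtain ⟨X₄, h₄⟩ := stab (blk3 1 1 1) (by simp [F4])
  simp only [mul_blk3, Matrix.mul_one, Matrix.mul_zero] at h₁ h₂ h₃ h₄
  have hX : blk3 X₁ X₂ X₃ = blk3 X₄ X₄ X₄ := by
    calc blk3 X₁ X₂ X₃ = blk3 1 0 0 * g + blk3 0 1 0 * g + blk3 0 0 1 * g := by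
          simp only [h₁, h₂, h₃, blk3_add, add_zero, zero_add]
      _ = blk3 1 1 1 * g := by simp only [← Matrix.add_mul, blk3_add, add_zero, zero_add]
      _ = blk3 X₄ X₄ X₄ := h₄
  obtain ⟨e₁, e₂, e₃⟩ := blk3_inj.1 hX
  refine ⟨X₄, ext_of_blk3_mul ?_ ?_ ?_⟩ <;>
    simp only [blk3_mul_diag3, Matrix.one_mul, Matrix.zero_mul, h₁, h₂, h₃, e₁, e₂, e₃]

/-- An invertible `g ∈ GL(6,3)` maps each of the four lines of `F4` to
itself (acting on row vectors) if and only if `g = diag(E, E, E)` for some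
`E ∈ GL(2,3)`. -/
theorem stmt5 (g : Matrix (Fin 6) (Fin 6) F3) (hg : IsUnit g) :
    (∀ ℓ ∈ F4, ℓ.map g.vecMulLinear = ℓ) ↔
      ∃ E : Matrix (Fin 2) (Fin 2) F3, IsUnit E ∧ g = diag3 E := by
  constructor
  · intro h
    obtain ⟨E, rfl⟩ := exists_eq_diag3_of_forall_map_eq h
    exact ⟨E, isUnit_of_isUnit_diag3 hg, rfl⟩
  · rintro ⟨E, hE, rfl⟩ ℓ (rfl | rfl | rfl | rfl) <;>
      exact map_lineOf_blk3_diag3 hE (by simp) (by simp) (by simp)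
end

section
/- Let R and S be any 2×2 matrices over GF(3), and let M be a skew-symmetric 6×6 matrix over GF(3). Then the five lines represented by (I O O), (O I O), (O O I), (I I I), (I R S) are all totally isotropic with respect to M if and only if M has 2×2 block form [[O, A, B], [−Aᵀ, O, C], [−Bᵀ, −Cᵀ, O]] for some 2×2 matrices A, B, C over GF(3) such that both A + B + C and A·Rᵀ + B·Sᵀ + R·C·Sᵀ are symmetric matrices. -/
open Matrix

/-!
Write a 2×6 matrix as a row `(X Y Z)` of 2×2 blocks and `M` as a 3×3 array of 2×2 blocks
`N p q`. The line spanned by `(X Y Z)` is totally isotropic iff `∑ p q, T p * N p q * (T q)ᵀ = 0`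
with `T = ![X, Y, Z]`. The three coordinate lines make the diagonal blocks vanish, so by
skew-symmetry `M` has the displayed block form, and then that sum is `W - Wᵀ` with
`W = X A Yᵀ + X B Zᵀ + Y C Zᵀ`; for `(I I I)` and `(I R S)` this `W` is `A + B + C` and
`A Rᵀ + B Sᵀ + R C Sᵀ`.
-/

lemma span_rows_isotropic_iff {R m n : Type*} [CommRing R] [Fintype m] [Fintype n] [DecidableEq m]
    (P : Matrix m n R) (M : Matrix n n R) :
    (∀ x ∈ Submodule.span R (Set.range P.row), ∀ y ∈ Submodule.span R (Set.range P.row),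
      x ⬝ᵥ M *ᵥ y = 0) ↔ P * M * Pᵀ = 0 := by
  have key : ∀ c d : m → R, (c ᵥ* P) ⬝ᵥ M *ᵥ (d ᵥ* P) =
      Matrix.toLinearMap₂' R (S₁ := R) (S₂ := R) (P * M * Pᵀ) c d := by
    intro c d
    simp only [toLinearMap₂'_apply', ← mulVec_transpose P d, mulVec_mulVec, dotProduct_mulVec,
      vecMul_vecMul, Matrix.mul_assoc]
  simp only [← range_vecMulLinear, LinearMap.mem_range, vecMulLinear_apply, forall_exists_index,
    forall_apply_eq_imp_iff, key]
  rw [← LinearEquiv.map_eq_zero_iff (Matrix.toLinearMap₂' R (S₁ := R) (S₂ := R)),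
    LinearMap.ext_iff₂]
  rfl

lemma isotropic_lineOf_iff (P : Matrix (Fin 2) (Fin 6) F3) (M : Matrix (Fin 6) (Fin 6) F3) :
    (∀ x ∈ lineOf P, ∀ y ∈ lineOf P, x ⬝ᵥ M *ᵥ y = 0) ↔ P * M * Pᵀ = 0 :=
  span_rows_isotropic_iff P M

/-- Index `a + 2 * p` of `Fin 6` is entry `a` of block `p`. -/
abbrev blockEquiv : Fin 3 × Fin 2 ≃ Fin 6 := finProdFinEquiv

lemma sum_fin_six_eq_sum_blocks_s7 {M : Type*} [AddCommMonoid M] (f : Fin 6 → M) :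
    ∑ k, f k = ∑ p : Fin 3, ∑ a : Fin 2, f (blockEquiv (p, a)) := by
  rw [← Fintype.sum_prod_type', blockEquiv.sum_comp]

lemma blk3_apply_s7 (X Y Z : Matrix (Fin 2) (Fin 2) F3) (i : Fin 2) (j : Fin 6) :
    blk3 X Y Z i j = ![X, Y, Z] (blockEquiv.symm j).1 i (blockEquiv.symm j).2 := rfl

lemma blk33_apply (N : Matrix (Fin 3) (Fin 3) (Matrix (Fin 2) (Fin 2) F3)) (i j : Fin 6) :
    blk33 N i j =
      N (blockEquiv.symm i).1 (blockEquiv.symm j).1 (blockEquiv.symm i).2 (blockEquiv.symm j).2 :=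
  rfl

lemma blkAt_apply (M : Matrix (Fin 6) (Fin 6) F3) (p q : Fin 3) (a b : Fin 2) :
    blkAt M p q a b = M (blockEquiv (p, a)) (blockEquiv (q, b)) := by
  simp only [blkAt, of_apply]
  congr 1 <;> ext <;> exact Nat.add_comm _ _

lemma blk33_blkAt (M : Matrix (Fin 6) (Fin 6) F3) : blk33 (of (blkAt M)) = M := by
  ext i j
  simp only [blk33_apply, of_apply, blkAt_apply, Prod.mk.eta, Equiv.apply_symm_apply]

lemma blkAt_transpose_of_skew {M : Matrix (Fin 6) (Fin 6) F3} (hskew : Mᵀ = -M) (p q : Fin 3) :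
    blkAt M q p = -(blkAt M p q)ᵀ := by
  ext a b
  simpa [blkAt_apply] using congr_fun₂ hskew (blockEquiv (p, b)) (blockEquiv (q, a))

lemma blk3_mul_blk33_mul_transpose (X Y Z : Matrix (Fin 2) (Fin 2) F3)
    (N : Matrix (Fin 3) (Fin 3) (Matrix (Fin 2) (Fin 2) F3)) :
    blk3 X Y Z * blk33 N * (blk3 X Y Z)ᵀ = ∑ p, ∑ q, ![X, Y, Z] p * N p q * (![X, Y, Z] q)ᵀ := by
  ext i j
  simp only [mul_apply, transpose_apply, Matrix.sum_apply, sum_fin_six_eq_sum_blocks_s7, blk3_apply_s7,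
    blk33_apply, Equiv.symm_apply_apply, Finset.sum_mul]
  symm
  rw [Finset.sum_comm]
  exact Finset.sum_congr rfl fun q _ => Finset.sum_comm

lemma blk3_mul_mul_transpose (X Y Z : Matrix (Fin 2) (Fin 2) F3) (M : Matrix (Fin 6) (Fin 6) F3) :
    blk3 X Y Z * M * (blk3 X Y Z)ᵀ = ∑ p, ∑ q, ![X, Y, Z] p * blkAt M p q * (![X, Y, Z] q)ᵀ := by
  conv_lhs => rw [← blk33_blkAt M]
  exact blk3_mul_blk33_mul_transpose X Y Z _

lemma eq_blk33_skewForm {M : Matrix (Fin 6) (Fin 6) F3} (hskew : Mᵀ = -M)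
    (h₀ : blkAt M 0 0 = 0) (h₁ : blkAt M 1 1 = 0) (h₂ : blkAt M 2 2 = 0) :
    M = blk33 !![0, blkAt M 0 1, blkAt M 0 2; -(blkAt M 0 1)ᵀ, 0, blkAt M 1 2;
      -(blkAt M 0 2)ᵀ, -(blkAt M 1 2)ᵀ, 0] := by
  conv_lhs => rw [← blk33_blkAt M]
  congr 1
  ext1 p q
  fin_cases p <;> fin_cases q <;> simp [h₀, h₁, h₂, blkAt_transpose_of_skew hskew 0 1,
    blkAt_transpose_of_skew hskew 0 2, blkAt_transpose_of_skew hskew 1 2]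

lemma blk3_mul_skewForm_mul_transpose (X Y Z A B C : Matrix (Fin 2) (Fin 2) F3) :
    blk3 X Y Z * blk33 !![0, A, B; -Aᵀ, 0, C; -Bᵀ, -Cᵀ, 0] * (blk3 X Y Z)ᵀ =
      (X * A * Yᵀ + X * B * Zᵀ + Y * C * Zᵀ) - (X * A * Yᵀ + X * B * Zᵀ + Y * C * Zᵀ)ᵀ := by
  simp only [blk3_mul_blk33_mul_transpose, Fin.sum_univ_three, of_apply, cons_val', cons_val_zero,
    cons_val_one, cons_val, cons_val_fin_one, mul_zero, zero_mul, zero_add, add_zero, mul_neg,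
    neg_mul, transpose_add, transpose_mul, transpose_transpose]
  noncomm_ring

lemma blk3_mul_skewForm_mul_transpose_eq_zero_iff (X Y Z A B C : Matrix (Fin 2) (Fin 2) F3) :
    blk3 X Y Z * blk33 !![0, A, B; -Aᵀ, 0, C; -Bᵀ, -Cᵀ, 0] * (blk3 X Y Z)ᵀ = 0 ↔
      (X * A * Yᵀ + X * B * Zᵀ + Y * C * Zᵀ).IsSymm := by
  rw [blk3_mul_skewForm_mul_transpose, sub_eq_zero, eq_comm]
  rfl

/-- For 2×2 matrices `R`, `S` and a skew-symmetric 6×6 matrix `M` over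
`GF(3)`, the five lines represented by `(I O O)`, `(O I O)`, `(O O I)`, `(I I I)`,
`(I R S)` are all totally isotropic with respect to `M` if and only if `M` has block form
`[[O,A,B],[-Aᵀ,O,C],[-Bᵀ,-Cᵀ,O]]` with `A + B + C` and `A Rᵀ + B Sᵀ + R C Sᵀ` both
symmetric. -/
theorem stmt7 (R S : Matrix (Fin 2) (Fin 2) F3)
    (M : Matrix (Fin 6) (Fin 6) F3) (hskew : Mᵀ = -M) :
    (∀ ℓ ∈ ({lineOf (blk3 1 0 0), lineOf (blk3 0 1 0), lineOf (blk3 0 0 1),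
        lineOf (blk3 1 1 1), lineOf (blk3 1 R S)} : Set (Submodule F3 V6)),
      ∀ x ∈ ℓ, ∀ y ∈ ℓ, x ⬝ᵥ M.mulVec y = 0) ↔
    ∃ A B C : Matrix (Fin 2) (Fin 2) F3,
      M = blk33 !![0, A, B; -Aᵀ, 0, C; -Bᵀ, -Cᵀ, 0] ∧
      (A + B + C).IsSymm ∧ (A * Rᵀ + B * Sᵀ + R * C * Sᵀ).IsSymm := by
  simp only [Set.mem_insert_iff, Set.mem_singleton_iff, forall_eq_or_imp, forall_eq,
    isotropic_lineOf_iff]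
  constructor
  · rintro ⟨h₀, h₁, h₂, hsum, hRS⟩
    simp only [blk3_mul_mul_transpose, Fin.sum_univ_three, cons_val_zero, cons_val_one, cons_val,
      transpose_one, transpose_zero, mul_one, one_mul, mul_zero, zero_mul, add_zero,
      zero_add] at h₀ h₁ h₂
    have hM := eq_blk33_skewForm hskew h₀ h₁ h₂
    rw [hM, blk3_mul_skewForm_mul_transpose_eq_zero_iff] at hsum hRS
    exact ⟨_, _, _, hM, by simpa using hsum, by simpa using hRS⟩
  · rintro ⟨A, B, C, rfl, hABC, hRS⟩
    simp [blk3_mul_skewForm_mul_transpose_eq_zero_iff, hABC, hRS]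
end

section
/- Sylvester's duad–syntheme geometry is a generalized quadrangle of order (2,2): in the incidence structure whose points are the 15 duads of {1,2,3,4,5,6}, whose lines are the 15 synthemes, and where a duad is incident with a syntheme exactly when it is one of its three members, every line is incident with exactly 3 points, every point is incident with exactly 3 lines, two distinct points are incident with at most one common line, and for every non-incident point–line pair (P, L) there is exactly one point Q incident with L such that P and Q are incident with a common line. -/
/-!
A syntheme is determined by any two of its duads `d, e`: its third duad must be the
complement of `d ∪ e`, and conversely any two disjoint duads complete to a syntheme in this
way. So two duads are collinear exactly when they are disjoint, which gives the "at most one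
line" axiom, and a duad `d ∉ L` meets the two duads of `L` containing its two points, leaving
exactly the third one disjoint from it. The synthemes through a duad `d` are indexed by the
partner of a fixed point `p ∉ d`, one of the three remaining points.
-/

/-- A duad: an unordered pair of distinct elements of `{1,…,6}` (modelled as a
2-element subset of `Fin 6`). -/
def IsDuad (d : Finset (Fin 6)) : Prop := d.card = 2

/-- A syntheme: a set of three mutually disjoint duads (a perfect matching of the
six-element set). -/
def IsSyntheme (s : Finset (Finset (Fin 6))) : Prop :=
  s.card = 3 ∧ (∀ d ∈ s, IsDuad d) ∧ ∀ d ∈ s, ∀ e ∈ s, d ≠ e → Disjoint d e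

open Finset

lemma IsDuad.ne_of_disjoint {d e : Finset (Fin 6)} (hd : IsDuad d) (hde : Disjoint d e) :
    d ≠ e := by
  rintro rfl
  rw [disjoint_self_iff_empty] at hde
  simp [IsDuad, hde] at hd

lemma IsDuad.exists_eq_pair_of_mem {e : Finset (Fin 6)} (he : IsDuad e) {p : Fin 6}
    (hp : p ∈ e) : ∃ q, q ≠ p ∧ e = {p, q} := by
  obtain ⟨q, hq⟩ := card_eq_one.mp (by rw [card_erase_of_mem hp, he])
  refine ⟨q, ne_of_mem_erase (hq ▸ mem_singleton_self q), ?_⟩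
  rw [← insert_erase hp, hq]

lemma IsDuad.compl_union {d e : Finset (Fin 6)} (hd : IsDuad d) (he : IsDuad e)
    (hde : Disjoint d e) : IsDuad (d ∪ e)ᶜ := by
  unfold IsDuad at *
  rw [card_compl, card_union_of_disjoint hde, hd, he, Fintype.card_fin]

lemma isSyntheme_triple {d e f : Finset (Fin 6)} (hd : IsDuad d) (he : IsDuad e)
    (hf : IsDuad f) (hde : Disjoint d e) (hdf : Disjoint d f) (hef : Disjoint e f) :
    IsSyntheme {d, e, f} := by
  refine ⟨?_, ?_, ?_⟩
  · rw [card_insert_of_notMem, card_pair (he.ne_of_disjoint hef)]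
    simp [hd.ne_of_disjoint hde, hd.ne_of_disjoint hdf]
  · simp only [mem_insert, mem_singleton, forall_eq_or_imp, forall_eq]
    exact ⟨hd, he, hf⟩
  · simp only [mem_insert, mem_singleton]
    rintro a (rfl | rfl | rfl) b (rfl | rfl | rfl) hab <;>
      first | exact absurd rfl hab | assumption | exact Disjoint.symm ‹_›

lemma isSyntheme_insert_compl {d e : Finset (Fin 6)} (hd : IsDuad d) (he : IsDuad e)
    (hde : Disjoint d e) : IsSyntheme {d, e, (d ∪ e)ᶜ} :=
  isSyntheme_triple hd he (hd.compl_union he hde) hde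
    (disjoint_compl_right.mono_right (compl_subset_compl.mpr subset_union_left))
    (disjoint_compl_right.mono_right (compl_subset_compl.mpr subset_union_right))

lemma IsSyntheme.isDuad_of_mem {s : Finset (Finset (Fin 6))} (hs : IsSyntheme s)
    {d : Finset (Fin 6)} (hd : d ∈ s) : IsDuad d :=
  hs.2.1 d hd

lemma IsSyntheme.disjoint_of_mem {s : Finset (Finset (Fin 6))} (hs : IsSyntheme s)
    {d e : Finset (Fin 6)} (hd : d ∈ s) (he : e ∈ s) (hde : d ≠ e) : Disjoint d e :=
  hs.2.2 d hd e he hde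

lemma IsSyntheme.exists_mem_of_mem {s : Finset (Finset (Fin 6))} (hs : IsSyntheme s)
    (x : Fin 6) : ∃ e ∈ s, x ∈ e := by
  obtain ⟨hcard, hduad, hdisj⟩ := hs
  have hcover : s.biUnion id = univ := by
    apply eq_univ_of_card
    rw [card_biUnion (t := id) fun d hd e he hde => hdisj d hd e he hde]
    simp only [id_eq]
    rw [sum_const_nat hduad, hcard]
    rfl
  simpa using hcover.ge (mem_univ x)

lemma IsSyntheme.eq_insert_compl {s : Finset (Finset (Fin 6))} (hs : IsSyntheme s)
    {d e : Finset (Fin 6)} (hd : d ∈ s) (he : e ∈ s) (hde : d ≠ e) :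
    s = {d, e, (d ∪ e)ᶜ} := by
  have hdisj := hs.disjoint_of_mem hd he hde
  have hcompl_duad := (hs.isDuad_of_mem hd).compl_union (hs.isDuad_of_mem he) hdisj
  have hcompl : (d ∪ e)ᶜ ∈ s := by
    obtain ⟨x, hx⟩ : ((d ∪ e)ᶜ).Nonempty := by
      rw [← card_pos, hcompl_duad]; norm_num
    obtain ⟨f, hf, hxf⟩ := hs.exists_mem_of_mem x
    have hxde : x ∉ d ∧ x ∉ e := by simpa using hx
    have hfd : Disjoint f d := hs.disjoint_of_mem hf hd (by rintro rfl; exact hxde.1 hxf)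
    have hfe : Disjoint f e := hs.disjoint_of_mem hf he (by rintro rfl; exact hxde.2 hxf)
    have hsub : f ⊆ (d ∪ e)ᶜ :=
      subset_compl_iff_disjoint_right.mpr (disjoint_union_right.mpr ⟨hfd, hfe⟩)
    rwa [← eq_of_subset_of_card_le hsub (by rw [hs.isDuad_of_mem hf, hcompl_duad])]
  symm
  have hT := isSyntheme_insert_compl (hs.isDuad_of_mem hd) (hs.isDuad_of_mem he) hdisj
  refine eq_of_subset_of_card_le ?_ (by rw [hs.1, hT.1])
  simp only [insert_subset_iff, singleton_subset_iff]
  exact ⟨hd, he, hcompl⟩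

lemma exists_isSyntheme_mem_mem_iff {d e : Finset (Fin 6)} (hd : IsDuad d) (he : IsDuad e)
    (hde : d ≠ e) : (∃ s, IsSyntheme s ∧ d ∈ s ∧ e ∈ s) ↔ Disjoint d e :=
  ⟨fun ⟨_, hs, hds, hes⟩ => hs.disjoint_of_mem hds hes hde,
    fun h => ⟨_, isSyntheme_insert_compl hd he h, by simp, by simp⟩⟩

lemma IsSyntheme.existsUnique_disjoint {L : Finset (Finset (Fin 6))} (hL : IsSyntheme L)
    {d : Finset (Fin 6)} (hd : IsDuad d) (hdL : d ∉ L) : ∃! e, e ∈ L ∧ Disjoint d e := by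
  obtain ⟨x, y, -, rfl⟩ := card_eq_two.mp hd
  obtain ⟨a, haL, hxa⟩ := hL.exists_mem_of_mem x
  obtain ⟨b, hbL, hyb⟩ := hL.exists_mem_of_mem y
  have hab : a ≠ b := by
    rintro rfl
    have hsub : ({x, y} : Finset (Fin 6)) ⊆ a := insert_subset hxa (singleton_subset_iff.mpr hyb)
    exact hdL (eq_of_subset_of_card_le hsub (by rw [hL.isDuad_of_mem haL, hd]) ▸ haL)
  have hL_eq := hL.eq_insert_compl haL hbL hab
  refine ⟨(a ∪ b)ᶜ, ⟨by rw [hL_eq]; simp, ?_⟩, ?_⟩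
  · rw [_root_.disjoint_compl_right_iff]
    exact insert_subset (mem_union_left _ hxa) (singleton_subset_iff.mpr (mem_union_right _ hyb))
  · rintro e ⟨heL, hde⟩
    rw [hL_eq, mem_insert, mem_insert, mem_singleton] at heL
    rcases heL with rfl | rfl | rfl
    · exact absurd hxa (disjoint_left.mp hde (mem_insert_self x {y}))
    · exact absurd hyb (disjoint_left.mp hde (by simp))
    · rfl

lemma ncard_setOf_isSyntheme_mem {d : Finset (Fin 6)} (hd : IsDuad d) :
    {s | IsSyntheme s ∧ d ∈ s}.ncard = 3 := by
  obtain ⟨p, hp⟩ : dᶜ.Nonempty := by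
    rw [← card_pos, card_compl, hd]; norm_num
  set T : Fin 6 → Finset (Finset (Fin 6)) := fun q => {d, {p, q}, (d ∪ {p, q})ᶜ}
  have hpd : p ∉ d := mem_compl.mp hp
  have himage : {s | IsSyntheme s ∧ d ∈ s} = T '' ↑(dᶜ.erase p) := by
    ext s
    constructor
    · rintro ⟨hs, hds⟩
      obtain ⟨e, he, hpe⟩ := hs.exists_mem_of_mem p
      have hed : e ≠ d := by rintro rfl; exact hpd hpe
      obtain ⟨q, hqp, rfl⟩ := (hs.isDuad_of_mem he).exists_eq_pair_of_mem hpe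
      have hqd : q ∉ d := disjoint_left.mp (hs.disjoint_of_mem he hds hed) (by simp)
      exact ⟨q, by simp [hqp, hqd], (hs.eq_insert_compl hds he hed.symm).symm⟩
    · rintro ⟨q, hq, rfl⟩
      obtain ⟨hqd, hqp⟩ : q ∉ d ∧ q ≠ p := by simpa using hq
      refine ⟨isSyntheme_insert_compl hd (card_pair hqp.symm) ?_, by simp [T]⟩
      simp [hpd, hqd]
  have hinj : Set.InjOn T ↑(dᶜ.erase p) := by
    intro q hq q' hq' hTq
    obtain ⟨-, hq'p⟩ : q' ∉ d ∧ q' ≠ p := by simpa using hq'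
    have : ({p, q'} : Finset (Fin 6)) ∈ T q := hTq ▸ by simp [T]
    simp only [T, mem_insert, mem_singleton] at this
    rcases this with h | h | h
    · exact absurd (h ▸ mem_insert_self p {q'}) hpd
    · have hq'q : q' ∈ ({p, q} : Finset (Fin 6)) := h ▸ by simp
      simpa [hq'p, eq_comm] using hq'q
    · have hpT : p ∈ (d ∪ {p, q})ᶜ := h ▸ mem_insert_self p {q'}
      simp at hpT
  rw [himage, hinj.ncard_image, Set.ncard_coe_finset, card_erase_of_mem hp, card_compl, hd]
  rfl

/-- Sylvester's duad–syntheme geometry is a generalised quadrangle of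
order `(2,2)`: each syntheme contains exactly 3 duads, each duad lies in exactly 3
synthemes, two distinct duads lie in at most one common syntheme, and for every
non-incident duad–syntheme pair `(P, L)` there is exactly one duad of `L` collinear
with `P`. -/
theorem stmt17 :
    (∀ L : Finset (Finset (Fin 6)), IsSyntheme L →
      {d : Finset (Fin 6) | IsDuad d ∧ d ∈ L}.ncard = 3) ∧
    (∀ d : Finset (Fin 6), IsDuad d →
      {s : Finset (Finset (Fin 6)) | IsSyntheme s ∧ d ∈ s}.ncard = 3) ∧
    (∀ d e : Finset (Fin 6), IsDuad d → IsDuad e → d ≠ e →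
      {s : Finset (Finset (Fin 6)) | IsSyntheme s ∧ d ∈ s ∧ e ∈ s}.ncard ≤ 1) ∧
    (∀ (d : Finset (Fin 6)) (L : Finset (Finset (Fin 6))),
      IsDuad d → IsSyntheme L → d ∉ L →
      ∃! e : Finset (Fin 6), e ∈ L ∧
        ∃ s : Finset (Finset (Fin 6)), IsSyntheme s ∧ d ∈ s ∧ e ∈ s) := by
  refine ⟨fun L hL => ?_, fun d hd => ncard_setOf_isSyntheme_mem hd,
    fun d e _ _ hde => ?_, fun d L hd hL hdL => ?_⟩
  · have hpoints : {d | IsDuad d ∧ d ∈ L} = ↑L :=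
      Set.ext fun d => ⟨And.right, fun hdL => ⟨hL.isDuad_of_mem hdL, hdL⟩⟩
    rw [hpoints, Set.ncard_coe_finset, hL.1]
  · rw [Set.ncard_le_one_iff]
    rintro s t ⟨hs, hds, hes⟩ ⟨ht, hdt, het⟩
    rw [hs.eq_insert_compl hds hes hde, ht.eq_insert_compl hdt het hde]
  · refine (existsUnique_congr fun e => and_congr_right fun heL => ?_).mpr
      (hL.existsUnique_disjoint hd hdL)
    exact exists_isSyntheme_mem_mem_iff hd (hL.isDuad_of_mem heL) (fun h => hdL (h ▸ heL))
end
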